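/- Let F be a field of characteristic zero, β ∈ F, and let (y₁,ₙ), (y₂,ₙ) be sequences of nonzero elements of F with y₁,ₙ + β ≠ 0, y₁,ₙ + β² ≠ 0 and y₁,ₙ + 1 ≠ 0 for all n, satisfying y₁,ₙ₊₁·y₁,ₙ = (y₁,ₙ+β)²·y₂,ₙ + β² and y₂,ₙ₊₁·y₂,ₙ·(y₁,ₙ+β)² = y₁,ₙ₊₁ + β² for all n ≥ 0. Let K = K̃₂(y₁,₀, y₂,₀) be the value of the first integral K̃₂(y₁,y₂) = y₁y₂ + y₁ + (2β+1)y₂ + β(β+2)y₂/y₁ + β²y₂/y₁² + (2β²+2β+1)/y₁ + 1/y₂ + 2β²/y₁² + (β²+1)/(y₁y₂) + β²/(y₁²y₂). Then: (i) ŵₙ = y₁,ₙ + β² satisfies the Lyness recurrence ŵ_{n+1}·ŵ_{n-1} = (1−β²)·ŵₙ + (β²·K + 2β(β³+1)) for all n ≥ 1; and (ii) vₙ = y₁,ₙ + 1 satisfies the Somos-5 QRT recurrence v_{n+1}·vₙ·v_{n-1} = γ̂·vₙ + ξ̂ for all n ≥ 1, where γ̂ = K + 2β + 2 and ξ̂ =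 (β²−1)·γ̂. -/
import Mathlib


/-- The first integral `K̃₂` of the deformed B₃ map `φ̂₂` (case `b₁ = β`,
`b₂ = b₃ = β²`). -/
noncomputable def KtilB3₂ {F : Type*} [Field F] (β y₁ y₂ : F) : F :=
  y₁ * y₂ + y₁ + (2 * β + 1) * y₂ + β * (β + 2) * y₂ / y₁ + β ^ 2 * y₂ / y₁ ^ 2 +
    (2 * β ^ 2 + 2 * β + 1) / y₁ + 1 / y₂ + 2 * β ^ 2 / y₁ ^ 2 +
    (β ^ 2 + 1) / (y₁ * y₂) + β ^ 2 / (y₁ ^ 2 * y₂)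

def NB3 {F : Type*} [Field F] (β x y : F) : F :=
  x^3*y^2 + x^3*y + (2*β+1)*x^2*y^2 + β*(β+2)*x*y^2 + β^2*y^2 +
    (2*β^2+2*β+1)*x*y + x^2 + 2*β^2*y + (β^2+1)*x + β^2

lemma Ktil_eq {F : Type*} [Field F] (β x y : F) (hx : x ≠ 0) (hy : y ≠ 0) :
    KtilB3₂ β x y = NB3 β x y / (x^2*y) := by
  have hxy : x^2*y ≠ 0 := mul_ne_zero (pow_ne_zero 2 hx) hy
  unfold KtilB3₂ NB3
  simp only [add_div]
  rw [show x^3*y^2/(x^2*y) = x*y from by rw [div_eq_iff hxy]; ring,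
    show x^3*y/(x^2*y) = x from by rw [div_eq_iff hxy]; ring,
    show (2*β+1)*x^2*y^2/(x^2*y) = (2*β+1)*y from by rw [div_eq_iff hxy]; ring,
    show β*(β+2)*x*y^2/(x^2*y) = β*(β+2)*y/x from by rw [div_eq_div_iff hxy hx]; ring,
    show β^2*y^2/(x^2*y) = β^2*y/x^2 from by rw [div_eq_div_iff hxy (pow_ne_zero 2 hx)]; ring,
    show (2*β^2+2*β+1)*x*y/(x^2*y) = (2*β^2+2*β+1)/x from by rw [div_eq_div_iff hxy hx]; ring,
    show x^2/(x^2*y) = 1/y from by rw [div_eq_div_iff hxy hy]; ring,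
    show 2*β^2*y/(x^2*y) = 2*β^2/x^2 from by rw [div_eq_div_iff hxy (pow_ne_zero 2 hx)]; ring,
    show (β^2+1)*x/(x^2*y) = (β^2+1)/(x*y) from by rw [div_eq_div_iff hxy (mul_ne_zero hx hy)]; ring]
  ring

set_option maxHeartbeats 1000000 in
lemma KtilB3₂_invariant {F : Type*} [Field F] (β a b A B : F)
    (ha : a ≠ 0) (hb : b ≠ 0) (hab : a + β ≠ 0)
    (hA0 : A ≠ 0) (hB0 : B ≠ 0)
    (hA1 : A * a = (a + β) ^ 2 * b + β ^ 2)
    (hB1 : B * b * (a + β) ^ 2 = A + β ^ 2) :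
    KtilB3₂ β A B = KtilB3₂ β a b := by
  have hm : a^5*((b*(a+β)^2)^2) ≠ 0 :=
    mul_ne_zero (pow_ne_zero 5 ha) (pow_ne_zero 2 (mul_ne_zero hb (pow_ne_zero 2 hab)))
  rw [Ktil_eq β A B hA0 hB0, Ktil_eq β a b ha hb,
    div_eq_div_iff (mul_ne_zero (pow_ne_zero 2 hA0) hB0) (mul_ne_zero (pow_ne_zero 2 ha) hb)]
  apply mul_right_cancel₀ hm
  unfold NB3
  linear_combination ((a^5*b*β^2*A^3 + a^5*b*β^4*A^2 + a^5*b^2*β^2*A^3 + a^5*b^2*β^4*A^2 + a^6*b*A^3 + a^6*b*A^4 + (2)*a^6*b*β*A^3 + a^6*b*β^2*A^2 + (2)*a^6*b*β^2*A^3 + (2)*a^6*b*β^3*A^2 + a^6*b*β^4*A^2 + (2)*a^6*b^2*β*A^3 + a^6*b^2*β^2*A^3 + (2)*a^6*b^2*β^3*A^2 + a^6*b^2*β^4*A^2 + (-1)*a^7*b*A^2 + (-2)*a^7*b*β*A^2 + (-2)*a^7*b*β^2*A + (-1)*a^7*b*β^2*A^2 + (-2)*a^7*b*β^3*A + (-1)*a^7*b*β^4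 + (-1)*a^7*b*β^4*A + a^7*b^2*A^3 + (2)*a^7*b^2*β*A^3 + (-1)*a^7*b^2*β^2*A + (2)*a^7*b^2*β^3*A^2 + (-1)*a^7*b^2*β^4 + (-1)*a^7*b^2*β^4*A + (-1)*a^8*b*A^2 + (-1)*a^8*b*β^2*A + a^8*b^2*A^3 + (-2)*a^8*b^2*β*A + (-2)*a^8*b^2*β*A^2 + a^8*b^2*β^2*A^2 + (-2)*a^8*b^2*β^3 + (-2)*a^8*b^2*β^3*A + (-1)*a^9*b^2*A + (-1)*a^9*b^2*A^2 + (-1)*a^9*b^2*β^2 + (-1)*a^9*b^2*β^2*A)) * hA1 + (((-1)*a^5*b*β^4*A^2 + (-2)*a^5*b^2*β^4*A^2 + (-1)*a^5*b^3*β^4*A^2 + (-1)*a^6*b*β^2*A^2 + (-2)*a^6*b*β^3*A^2 + (-1)*a^6*b*β^4*A^2 + (-1)*a^6*b^2*β^2*A^2 + (-6)*a^6*b^2*β^3*A^2 + (-2)*a^6*b^2*β^4*A^2 + (-4)*a^6*b^3*β^3*A^2 + (-1)*a^6*b^3*β^4*A^2 + a^7*b*A^3 + a^7*b*A^4 + (2)*a^7*b*β*A^3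 + a^7*b*β^2*A + a^7*b*β^2*A^3 + (2)*a^7*b*β^3*A + a^7*b*β^4 + a^7*b*β^4*A + (-2)*a^7*b^2*β*A^2 + a^7*b^2*β^2*A + (-6)*a^7*b^2*β^2*A^2 + a^7*b^2*β^2*A^2*B + a^7*b^2*β^2*A^3 + a^7*b^2*β^2*A^3*B + (2)*a^7*b^2*β^3*A + (2)*a^7*b^2*β^3*A*B + (-4)*a^7*b^2*β^3*A^2 + (2)*a^7*b^2*β^3*A^2*B + (2)*a^7*b^2*β^4 + a^7*b^2*β^4*B + (2)*a^7*b^2*β^4*A + a^7*b^2*β^4*A*B + (-6)*a^7*b^3*β^2*A^2 + (-4)*a^7*b^3*β^3*A^2 + (-1)*a^8*b*A^2 + (-2)*a^8*b*β*A^2 + (-1)*a^8*b*β^2*A^2 + (-1)*a^8*b^2*A^2 + (2)*a^8*b^2*β*A + (-2)*a^8*b^2*β*A^2 + (2)*a^8*b^2*β*A^2*B + (2)*a^8*b^2*β*A^3 + (2)*a^8*b^2*β*A^3*B + (4)*a^8*b^2*β^2*A + (4)*a^8*b^2*β^2*A*B + (-3)*a^8*b^2*β^2*A^2 + (4)*a^8*b^2*β^2*A^2*B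 + (4)*a^8*b^2*β^3 + (2)*a^8*b^2*β^3*B + (4)*a^8*b^2*β^3*A + (2)*a^8*b^2*β^3*A*B + (-4)*a^8*b^3*β*A^2 + (-6)*a^8*b^3*β^2*A^2 + (-1)*a^9*b*A^2 + a^9*b^2*A + a^9*b^2*A^2*B + a^9*b^2*A^3 + a^9*b^2*A^3*B + (2)*a^9*b^2*β*A + (2)*a^9*b^2*β*A*B + (-2)*a^9*b^2*β*A^2 + (2)*a^9*b^2*β*A^2*B + (2)*a^9*b^2*β^2 + a^9*b^2*β^2*B + (2)*a^9*b^2*β^2*A + a^9*b^2*β^2*A*B + (-1)*a^9*b^3*A^2 + (-4)*a^9*b^3*β*A^2 + (-1)*a^10*b^2*A^2 + (-1)*a^10*b^3*A^2)) * hB1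

set_option maxHeartbeats 1000000 in
lemma lyness_step {F : Type*} [Field F] (β a b A B C : F)
    (ha : a ≠ 0) (hb : b ≠ 0) (hab : a + β ≠ 0) (hA0 : A ≠ 0)
    (hA1 : A * a = (a + β) ^ 2 * b + β ^ 2)
    (hB1 : B * b * (a + β) ^ 2 = A + β ^ 2)
    (hC1 : C * A = (A + β) ^ 2 * B + β ^ 2) :
    (C + β ^ 2) * (a + β ^ 2) =
      (1 - β ^ 2) * (A + β ^ 2) + (β ^ 2 * KtilB3₂ β a b + 2 * β * (β ^ 3 + 1)) := by
  have hm : a^3*(b*(a+β)^2)*A ≠ 0 :=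
    mul_ne_zero (mul_ne_zero (pow_ne_zero 3 ha) (mul_ne_zero hb (pow_ne_zero 2 hab))) hA0
  have key : ((C + β^2)*(a + β^2) - (1 - β^2)*(A + β^2) - 2*β*(β^3+1)) * (a^2*b)
      = β^2 * NB3 β a b :=
    mul_right_cancel₀ hm (by
      unfold NB3
      linear_combination ((a^3*b*β^4*A + a^3*b^2*β^4*A + a^4*b*β^2*A + a^4*b*β^2*A^2 + (2)*a^4*b*β^3*A + a^4*b*β^4*A + (2)*a^4*b^2*β^3*A + a^4*b^2*β^4*A + a^5*b*A^2 + (2)*a^5*b*β*A + a^5*b*β^2*A + (-1)*a^5*b*β^4 + a^5*b^2*β^2*A + (2)*a^5*b^2*β^3*A + (-1)*a^6*b*β^2 + a^6*b^2*β^2*A)) * hA1 + ((a^5*b*β^2*A^2 + (2)*a^5*b*β^3*A + a^5*b*β^4 + a^6*b*A^2 + (2)*a^6*b*β*A + a^6*b*β^2)) * hB1 + ((a^5*b^2*β^4 + a^6*b^2*β^2 + (2)*a^6*b^2*β^3 + (2)*a^7*b^2*β + a^7*b^2*β^2 + a^8*b^2)) * hC1)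
  rw [Ktil_eq β a b ha hb]
  have ha2b : a^2*b ≠ 0 := mul_ne_zero (pow_ne_zero 2 ha) hb
  field_simp
  linear_combination key

set_option maxHeartbeats 1000000 in
lemma somos_step {F : Type*} [Field F] (β a b A B C : F)
    (ha : a ≠ 0) (hb : b ≠ 0) (hab : a + β ≠ 0) (hA0 : A ≠ 0)
    (hA1 : A * a = (a + β) ^ 2 * b + β ^ 2)
    (hB1 : B * b * (a + β) ^ 2 = A + β ^ 2)
    (hC1 : C * A = (A + β) ^ 2 * B + β ^ 2) :
    (C + 1) * (A + 1) * (a + 1) =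
      (KtilB3₂ β a b + 2 * β + 2) * (A + 1) + (β ^ 2 - 1) * (KtilB3₂ β a b + 2 * β + 2) := by
  have hm : a^4*(b*(a+β)^2)*A ≠ 0 :=
    mul_ne_zero (mul_ne_zero (pow_ne_zero 4 ha) (mul_ne_zero hb (pow_ne_zero 2 hab))) hA0
  have key : (C + 1) * (A + 1) * (a + 1) * (a^2*b)
      = (NB3 β a b + (2*β+2)*(a^2*b)) * ((A + 1) + (β^2 - 1)) :=
    mul_right_cancel₀ hm (by
      unfold NB3
      linear_combination ((a^4*b*β^2*A^2 + a^4*b*β^4*A + a^4*b^2*β^2*A^2 + a^4*b^2*β^4*A + a^5*b*A^2 + a^5*b*A^3 + (2)*a^5*b*β*A^2 + a^5*b*β^2*A + (2)*a^5*b*β^2*A^2 + (2)*a^5*b*β^3*A + a^5*b*β^4*A + (2)*a^5*b^2*β*A^2 + a^5*b^2*β^2*A^2 + (2)*a^5*b^2*β^3*A + a^5*b^2*β^4*A + (-1)*a^6*b*A + a^6*b*A^2 + a^6*b*A^3 + (2)*a^6*b*β*A^2 + (-1)*a^6*b*β^2 + a^6*b*β^2*A + a^6*b*β^2*A^2 +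 (2)*a^6*b*β^3*A + a^6*b^2*A^2 + (2)*a^6*b^2*β*A^2 + a^6*b^2*β^2*A + (2)*a^6*b^2*β^3*A + (-1)*a^7*b*A + (-1)*a^7*b*β^2 + a^7*b^2*A^2 + a^7*b^2*β^2*A)) * hA1 + ((a^6*b*A^2 + a^6*b*A^3 + (2)*a^6*b*β*A + (2)*a^6*b*β*A^2 + a^6*b*β^2 + a^6*b*β^2*A + a^7*b*A^2 + a^7*b*A^3 + (2)*a^7*b*β*A + (2)*a^7*b*β*A^2 + a^7*b*β^2 + a^7*b*β^2*A)) * hB1 + ((a^6*b^2*β^2 + a^6*b^2*β^2*A + (2)*a^7*b^2*β + (2)*a^7*b^2*β*A + a^7*b^2*β^2 + a^7*b^2*β^2*A + a^8*b^2 + a^8*b^2*A + (2)*a^8*b^2*β + (2)*a^8*b^2*β*A + a^9*b^2 + a^9*b^2*A)) * hC1)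
  rw [Ktil_eq β a b ha hb]
  have ha2b : a^2*b ≠ 0 := mul_ne_zero (pow_ne_zero 2 ha) hb
  field_simp
  linear_combination key

/-- along orbits of the deformed B₃ map `φ̂₂`, the quantity
`wHatₙ = y₁,ₙ + β²` satisfies the Lyness recurrence
`wHat_{n+1}wHat_{n-1} = (1−β²)wHatₙ + (β²K + 2β(β³+1))` and the quantity
`vₙ = y₁,ₙ + 1` satisfies the Somos-5 QRT recurrence
`v_{n+1}vₙv_{n-1} = γ̂vₙ + ξ̂` with `γ̂ = K + 2β + 2`, `ξ̂ = (β²−1)γ̂`, where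
`K` is the value of the first integral `K̃₂`. -/
theorem deformed_B3_map2_lyness_and_somos5 {F : Type*} [Field F] [CharZero F] (β : F)
    (y₁ y₂ : ℕ → F)
    (h₁ : ∀ n, y₁ n ≠ 0) (h₂ : ∀ n, y₂ n ≠ 0)
    (hβ : ∀ n, y₁ n + β ≠ 0) (hβ2 : ∀ n, y₁ n + β ^ 2 ≠ 0) (h1 : ∀ n, y₁ n + 1 ≠ 0)
    (e₁ : ∀ n, y₁ (n + 1) * y₁ n = (y₁ n + β) ^ 2 * y₂ n + β ^ 2)
    (e₂ : ∀ n, y₂ (n + 1) * y₂ n * (y₁ n + β) ^ 2 = y₁ (n + 1) + β ^ 2)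
    (wHat v : ℕ → F) (hwHat : ∀ n, wHat n = y₁ n + β ^ 2) (hv : ∀ n, v n = y₁ n + 1) :
    (∀ n, wHat (n + 2) * wHat n = (1 - β ^ 2) * wHat (n + 1) +
      (β ^ 2 * KtilB3₂ β (y₁ 0) (y₂ 0) + 2 * β * (β ^ 3 + 1))) ∧
    (∀ n, v (n + 2) * v (n + 1) * v n =
      (KtilB3₂ β (y₁ 0) (y₂ 0) + 2 * β + 2) * v (n + 1) +
        (β ^ 2 - 1) * (KtilB3₂ β (y₁ 0) (y₂ 0) + 2 * β + 2)) := by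
  have Kinv : ∀ n, KtilB3₂ β (y₁ n) (y₂ n) = KtilB3₂ β (y₁ 0) (y₂ 0) := by
    intro n
    induction n with
    | zero => rfl
    | succ k ih =>
      rw [← ih]
      exact KtilB3₂_invariant β (y₁ k) (y₂ k) (y₁ (k + 1)) (y₂ (k + 1)) (h₁ k) (h₂ k)
        (hβ k) (h₁ (k + 1)) (h₂ (k + 1)) (e₁ k) (e₂ k)
  constructor
  · intro n
    rw [hwHat, hwHat, hwHat, ← Kinv n]
    exact lyness_step β (y₁ n) (y₂ n) (y₁ (n + 1)) (y₂ (n + 1)) (y₁ (n + 2))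
      (h₁ n) (h₂ n) (hβ n) (h₁ (n + 1)) (e₁ n) (e₂ n) (e₁ (n + 1))
  · intro n
    rw [hv, hv, hv, ← Kinv n]
    exact somos_step β (y₁ n) (y₂ n) (y₁ (n + 1)) (y₂ (n + 1)) (y₁ (n + 2))
      (h₁ n) (h₂ n) (hβ n) (h₁ (n + 1)) (e₁ n) (e₂ n) (e₁ (n + 1))
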